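/- arXiv:1311.4262 — 3 statements merged into one kernel-verified Lean document; each statement's English description precedes it below -/
import Mathlib

section
/- Let s be a nonzero complex number, y a complex number, x = s + s^{-1}, A = [[s,1],[0,s^{-1}]], B = [[s,0],[2-y,s^{-1}]], and for a positive integer m set W = (B·A^{-1})^m·(B·A)·(B^{-1}·A)^m, λ = tr(W), and α = 1 + (y+2-x^2)·S_{m-1}(y)·(S_m(y) - S_{m-1}(y)). Then for every integer n, W^n·A - B·W^n equals the 2×2 matrix [[0, φ],[(y-2)·φ, 0]], where φ = S_{n-1}(λ)·α - S_{n-2}(λ). -/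
/-!
`B A⁻¹` and `B⁻¹ A` lie in `SL₂` and have trace `y`. By Cayley–Hamilton, a matrix `M` of
determinant one satisfies `M ^ n = S (n - 1) (tr M) • M - S (n - 2) (tr M) • 1` for all `n : ℤ`.
This applies to the `m`-th powers in `W`, and to `W ^ n` itself. After substituting the first two
formulas, an entrywise computation that uses the Chebyshev identity
`S (m - 2) ² + S (m - 1) ² - y S (m - 2) S (m - 1) = 1` shows `W A - B W = α (A - B)`.
The same relation for `W ^ n = a W - b` then carries the coefficient `a α - b`, and
`A - B = !![0, 1; y - 2, 0]`.
-/

open Real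

/-- Auxiliary sequence for the Chebyshev-like polynomials on natural indices. -/
def Saux {R : Type*} [CommRing R] : ℕ → R → R
  | 0, _ => 1
  | 1, z => z
  | (n + 2), z => z * Saux (n + 1) z - Saux n z

/-- The Chebyshev-like polynomials `S j` indexed by all integers `j`:
`S 0 z = 1`, `S 1 z = z`, and `S (j + 1) z = z * S j z - S (j - 1) z` for all `j : ℤ`
(so `S (-1) z = 0`, `S (-2) z = -1`, and in general `S (-j) z = -S (j - 2) z`). -/
def S {R : Type*} [CommRing R] (j : ℤ) (z : R) : R :=
  if 0 ≤ j then Saux j.toNat z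
  else if j = -1 then 0
  else -Saux (-j - 2).toNat z

section Chebyshev

variable {R : Type*} [CommRing R]

theorem Saux_eq_eval_chebyshevS (z : R) :
    ∀ k : ℕ, Saux k z = (Polynomial.Chebyshev.S R k).eval z
  | 0 => by simp [Saux]
  | 1 => by simp [Saux]
  | k + 2 => by
    rw [Saux, Saux_eq_eval_chebyshevS z (k + 1), Saux_eq_eval_chebyshevS z k]
    push_cast
    simp [Polynomial.Chebyshev.S_add_two]

theorem S_eq_eval_chebyshevS (j : ℤ) (z : R) : S j z = (Polynomial.Chebyshev.S R j).eval z := by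
  unfold S
  split_ifs with hj hj'
  · rw [Saux_eq_eval_chebyshevS, Int.toNat_of_nonneg hj]
  · simp [hj']
  · obtain ⟨k, rfl⟩ : ∃ k : ℕ, j = -(k : ℤ) - 2 := ⟨(-j - 2).toNat, by omega⟩
    simp [Saux_eq_eval_chebyshevS]

theorem S_eq (j : ℤ) (z : R) : S j z = z * S (j - 1) z - S (j - 2) z := by
  simp [S_eq_eval_chebyshevS, Polynomial.Chebyshev.S_eq R j]

theorem S_sub_one_sq_add_S_sq (j : ℤ) (z : R) :
    S (j - 1) z ^ 2 + S j z ^ 2 - z * S (j - 1) z * S j z = 1 := by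
  simpa [S_eq_eval_chebyshevS] using
    congrArg (Polynomial.eval z) (Polynomial.Chebyshev.S_sq_add_S_sq R (j - 1))

end Chebyshev

namespace Matrix

variable {R : Type*} [CommRing R]

theorem mul_self_fin_two (M : Matrix (Fin 2) (Fin 2) R) : M * M = M.trace • M - M.det • 1 := by
  ext i j
  fin_cases i <;> fin_cases j <;>
    simp [mul_apply, trace_fin_two, det_fin_two] <;> ring

theorem det_fin_two_of_inv {K : Type*} [Field K] {s : K} (hs : s ≠ 0) (b c : K) :
    det !![s, b; c, s⁻¹] = 1 - b * c := by
  simp [det_fin_two_of, hs]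

theorem inv_fin_two_of_det_eq_one {a b c d : R} (h : det !![a, b; c, d] = 1) :
    (!![a, b; c, d])⁻¹ = !![d, -b; -c, a] := by
  rw [inv_def, h, Ring.inverse_one, one_smul, adjugate_fin_two_of]

theorem zpow_fin_two_of_det_eq_one {M : Matrix (Fin 2) (Fin 2) R} (h : M.det = 1) (n : ℤ) :
    M ^ n = S (n - 1) M.trace • M - S (n - 2) M.trace • 1 := by
  set P : ℤ → Matrix (Fin 2) (Fin 2) R := fun n ↦ S (n - 1) M.trace • M - S (n - 2) M.trace • 1
  have hu : IsUnit M.det := h ▸ isUnit_one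
  have hP : ∀ n, P (n + 1) = P n * M := fun n ↦ by
    have hn : n + 1 - 2 = n - 1 := by ring
    simp only [P, sub_mul, smul_mul, one_mul, mul_self_fin_two, h, add_sub_cancel_right, hn,
      S_eq n]
    module
  change M ^ n = P n
  induction n using Int.induction_on with
  | zero => simp [P, S_eq_eval_chebyshevS]
  | succ n ih => rw [zpow_add_one hu, ih, hP]
  | pred n ih =>
    rw [zpow_sub_one hu, ih, ← sub_add_cancel (-(n : ℤ)) 1, hP, mul_assoc, sub_add_cancel,
      mul_nonsing_inv _ hu, mul_one]

theorem mul_sub_mul_of_smul_sub_smul_one {ι : Type*} [Fintype ι] [DecidableEq ι]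
    {W A B : Matrix ι ι R} {α : R} (h : W * A - B * W = α • (A - B)) (a b : R) :
    (a • W - b • 1) * A - B * (a • W - b • 1) = (a * α - b) • (A - B) := by
  simp only [sub_mul, mul_sub, smul_mul, mul_smul_comm, one_mul, mul_one]
  linear_combination (norm := module) a • h

end Matrix

section TwistedCommutator

variable {K : Type*} [Field K] {s : K} (y : K)

theorem twisted_commutator_of_sq_add_sq (hs : s ≠ 0) {A B U V : Matrix (Fin 2) (Fin 2) K}
    (hA : A = !![s, 1; 0, s⁻¹]) (hB : B = !![s, 0; 2 - y, s⁻¹])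
    (hU : U = !![1, -s; (2 - y) * s⁻¹, y - 1]) (hV : V = !![1, s⁻¹; (y - 2) * s, y - 1])
    {p q : K} (hpq : q ^ 2 + p ^ 2 - y * q * p = 1) :
    (p • U - q • 1) * (B * A) * (p • V - q • 1) * A -
        B * ((p • U - q • 1) * (B * A) * (p • V - q • 1)) =
      (1 + (y + 2 - (s + s⁻¹) ^ 2) * p * ((y * p - q) - p)) • (A - B) := by
  subst hA hB hU hV
  ext i j
  fin_cases i <;> fin_cases j <;> simp [Matrix.one_fin_two]
  · ring
  · field_simp
    linear_combination s ^ 2 * hpq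
  · field_simp
    linear_combination (y - 2) * s ^ 2 * hpq
  · ring

theorem twisted_commutator_eq_smul_sub (hs : s ≠ 0) {A B : Matrix (Fin 2) (Fin 2) K}
    (hA : A = !![s, 1; 0, s⁻¹]) (hB : B = !![s, 0; 2 - y, s⁻¹]) (m : ℕ) :
    (B * A⁻¹) ^ m * (B * A) * (B⁻¹ * A) ^ m * A -
        B * ((B * A⁻¹) ^ m * (B * A) * (B⁻¹ * A) ^ m) =
      (1 + (y + 2 - (s + s⁻¹) ^ 2) * S (m - 1) y * (S m y - S (m - 1) y)) • (A - B) := by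
  have hAinv : A⁻¹ = !![s⁻¹, -1; 0, s] := by
    rw [hA, Matrix.inv_fin_two_of_det_eq_one] <;> simp [Matrix.det_fin_two_of_inv hs]
  have hBinv : B⁻¹ = !![s⁻¹, 0; y - 2, s] := by
    rw [hB, Matrix.inv_fin_two_of_det_eq_one] <;> simp [Matrix.det_fin_two_of_inv hs]
  have hU : B * A⁻¹ = !![1, -s; (2 - y) * s⁻¹, y - 1] := by
    rw [hB, hAinv, Matrix.mul_fin_two]
    simp [hs]
    ring
  have hV : B⁻¹ * A = !![1, s⁻¹; (y - 2) * s, y - 1] := by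
    rw [hBinv, hA, Matrix.mul_fin_two]
    simp [hs]
    ring
  have hpow : ∀ M : Matrix (Fin 2) (Fin 2) K, M.det = 1 → M.trace = y →
      M ^ m = S (m - 1) y • M - S (m - 2) y • 1 := fun M hdet htr ↦ by
    rw [← zpow_natCast, Matrix.zpow_fin_two_of_det_eq_one hdet, htr]
  have hdetU : (B * A⁻¹).det = 1 := by rw [hU, Matrix.det_fin_two_of]; field_simp; ring
  have hdetV : (B⁻¹ * A).det = 1 := by rw [hV, Matrix.det_fin_two_of]; field_simp; ring
  have htrU : (B * A⁻¹).trace = y := by rw [hU, Matrix.trace_fin_two_of]; ring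
  have htrV : (B⁻¹ * A).trace = y := by rw [hV, Matrix.trace_fin_two_of]; ring
  rw [hpow _ hdetU htrU, hpow _ hdetV htrV, S_eq m]
  refine twisted_commutator_of_sq_add_sq y hs hA hB hU hV ?_
  simpa [sub_sub, one_add_one_eq_two] using S_sub_one_sq_add_S_sq ((m : ℤ) - 1) y

end TwistedCommutator

theorem stmt4_general (s y x : ℂ) (hs : s ≠ 0) (hx : x = s + s⁻¹) (m : ℕ)
    (A B W : Matrix (Fin 2) (Fin 2) ℂ)
    (hA : A = !![s, 1; 0, s⁻¹]) (hB : B = !![s, 0; 2 - y, s⁻¹])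
    (hW : W = (B * A⁻¹) ^ m * (B * A) * (B⁻¹ * A) ^ m)
    (lam alp : ℂ) (hlam : lam = Matrix.trace W)
    (halp : alp = 1 + (y + 2 - x ^ 2) * S ((m : ℤ) - 1) y * (S (m : ℤ) y - S ((m : ℤ) - 1) y))
    (n : ℤ) :
    W ^ n * A - B * W ^ n =
      !![0, S (n - 1) lam * alp - S (n - 2) lam;
         (y - 2) * (S (n - 1) lam * alp - S (n - 2) lam), 0] := by
  have hdetA : A.det = 1 := by simp [hA, Matrix.det_fin_two_of_inv hs]
  have hdetB : B.det = 1 := by simp [hB, Matrix.det_fin_two_of_inv hs]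
  have hdetW : W.det = 1 := by simp [hW, Matrix.det_nonsing_inv, hdetA, hdetB]
  have hcomm : W * A - B * W = alp • (A - B) := by
    rw [hW, halp, hx]
    exact twisted_commutator_eq_smul_sub y hs hA hB m
  rw [Matrix.zpow_fin_two_of_det_eq_one hdetW, ← hlam,
    Matrix.mul_sub_mul_of_smul_sub_smul_one hcomm, hA, hB]
  ext i j
  fin_cases i <;> fin_cases j <;> simp [mul_comm]

theorem stmt4 (s y x : ℂ) (hs : s ≠ 0) (hx : x = s + s⁻¹) (m : ℕ) (hm : 0 < m)
    (A B W : Matrix (Fin 2) (Fin 2) ℂ)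
    (hA : A = !![s, 1; 0, s⁻¹]) (hB : B = !![s, 0; 2 - y, s⁻¹])
    (hW : W = (B * A⁻¹) ^ m * (B * A) * (B⁻¹ * A) ^ m)
    (lam alp : ℂ) (hlam : lam = Matrix.trace W)
    (halp : alp = 1 + (y + 2 - x ^ 2) * S ((m : ℤ) - 1) y * (S (m : ℤ) y - S ((m : ℤ) - 1) y))
    (n : ℤ) :
    W ^ n * A - B * W ^ n =
      !![0, S (n - 1) lam * alp - S (n - 2) lam;
         (y - 2) * (S (n - 1) lam * alp - S (n - 2) lam), 0] :=
  stmt4_general s y x hs hx m A B W hA hB hW lam alp hlam halp n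
end

section
/- Let m be a positive integer and n a nonzero integer, and let x, y be real numbers with |x| ≤ 2 and φ(x,y) = 0, where φ(x,y) = S_{n-1}(λ)·α - S_{n-2}(λ) with λ = 2 + (y-2)(y+2-x^2)·S_{m-1}(y)^2 and α = 1 - (y+2-x^2)·S_{m-1}(y)·(S_{m-1}(y) - S_{m-2}(y)). If |x| > 2·√(1 - 1/|4mn|), then y > 2. -/
open Real

/-! Suppose `y ≤ 2`. Put `A = S_{n-1}(λ)` and `u = (y + 2 - x²) S_{m-1}(y)²`. Since `S_{n-2}(λ) = α A`,
the identity `S_j(z)² + S_{j+1}(z)² - z S_j(z) S_{j+1}(z) = 1` at `λ` and at `y` gives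
`A² u (4 - x² - (2 - y) u) = 1`. Hence `u > 0`, so `-2 < y` and `λ = 2 - (2 - y) u ∈ [-2, 2]`.
On `[-2, 2]` one has `|S_{j-1}| ≤ |j|`, so `1 ≤ n² (4 - x²) m² (4 - x²)`, i.e.
`x² ≤ 4 - 1 / |mn|`, contradicting the lower bound on `|x|`. -/

open Polynomial

section CommRing

variable {R : Type*} [CommRing R]

lemma S_add_one (j : ℤ) (z : R) : S (j + 1) z = z * S j z - S (j - 1) z := by
  unfold S
  split_ifs <;> first | omega | skip
  · rw [show (j + 1).toNat = (j - 1).toNat + 2 by omega, show j.toNat = (j - 1).toNat + 1 by omega]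
    rfl
  · obtain rfl : j = 0 := by omega
    simp [Saux]
  · subst j
    simp [Saux]
  · obtain rfl : j = -2 := by omega
    simp [Saux]
  · rw [show (-j - 2).toNat = (-(j + 1) - 2).toNat + 1 by omega,
      show (-(j - 1) - 2).toNat = (-(j + 1) - 2).toNat + 2 by omega, Saux]
    ring

lemma S_eq_eval (j : ℤ) (z : R) : S j z = (Chebyshev.S R j).eval z := by
  induction j using Chebyshev.induct with
  | zero => simp [S, Saux]
  | one => simp [S, Saux]
  | add_two k ih₁ ih₀ =>
    have h := S_add_one ((k : ℤ) + 1) z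
    rw [add_assoc, one_add_one_eq_two, add_sub_cancel_right] at h
    simp [h, ih₁, ih₀]
  | neg_add_one k ih₀ ih₁ =>
    rw [Chebyshev.S_sub_one, eval_sub, eval_mul, eval_X, ← ih₀, ← ih₁]
    linear_combination S_add_one (-(k : ℤ)) z

lemma eval_S_sq_add_eval_S_sq (j : ℤ) (z : R) :
    (Chebyshev.S R j).eval z ^ 2 + (Chebyshev.S R (j + 1)).eval z ^ 2 -
      z * (Chebyshev.S R j).eval z * (Chebyshev.S R (j + 1)).eval z = 1 := by
  simpa using congrArg (eval z) (Chebyshev.S_sq_add_S_sq R j)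

lemma sq_eval_S_mul_eq_one_of_riley_root {m n : ℤ} {x y lam alp : R}
    (hlam : lam = 2 + (y - 2) * (y + 2 - x ^ 2) * (Chebyshev.S R (m - 1)).eval y ^ 2)
    (halp : alp = 1 - (y + 2 - x ^ 2) * (Chebyshev.S R (m - 1)).eval y *
      ((Chebyshev.S R (m - 1)).eval y - (Chebyshev.S R (m - 2)).eval y))
    (hroot : (Chebyshev.S R (n - 1)).eval lam * alp - (Chebyshev.S R (n - 2)).eval lam = 0) :
    (Chebyshev.S R (n - 1)).eval lam ^ 2 * ((y + 2 - x ^ 2) * (Chebyshev.S R (m - 1)).eval y ^ 2 *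
      (4 - x ^ 2 - (2 - y) * ((y + 2 - x ^ 2) * (Chebyshev.S R (m - 1)).eval y ^ 2))) = 1 := by
  have cassini_y := eval_S_sq_add_eval_S_sq (m - 2) y
  have cassini_lam := eval_S_sq_add_eval_S_sq (n - 2) lam
  rw [show m - 2 + 1 = m - 1 by ring] at cassini_y
  rw [show n - 2 + 1 = n - 1 by ring] at cassini_lam
  set a := (Chebyshev.S R (n - 1)).eval lam
  set b := (Chebyshev.S R (n - 2)).eval lam
  have h : a ^ 2 * (1 + alp ^ 2 - lam * alp) = 1 := by
    linear_combination cassini_lam + (alp * a + b - lam * a) * hroot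
  rw [hlam, halp] at h
  linear_combination h - (a * (y + 2 - x ^ 2) * (Chebyshev.S R (m - 1)).eval y) ^ 2 * cassini_y

end CommRing

section LinearOrderedRing

variable {R : Type*} [CommRing R] [LinearOrder R] [IsStrictOrderedRing R]

lemma abs_le_abs_add_one_of_sq_add_sq_sub_mul_eq_one {a b z : R} (hz : |z| ≤ 2)
    (h : a ^ 2 + b ^ 2 - z * a * b = 1) : |a| ≤ |b| + 1 := by
  have hzab : z * a * b ≤ 2 * (|a| * |b|) := calc
    z * a * b ≤ |z * a * b| := le_abs_self _
    _ = |z| * (|a| * |b|) := by rw [abs_mul, abs_mul, mul_assoc]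
    _ ≤ 2 * (|a| * |b|) := mul_le_mul_of_nonneg_right hz (by positivity)
  have hsq : (|a| - |b|) ^ 2 ≤ 1 := by nlinarith [sq_abs a, sq_abs b]
  linarith [le_abs_self (|a| - |b|), (sq_le_one_iff_abs_le_one _).1 hsq]

lemma abs_eval_S_sub_one_le {z : R} (hz : |z| ≤ 2) (n : ℤ) :
    |(Chebyshev.S R (n - 1)).eval z| ≤ |(n : R)| := by
  have hstep (j : ℤ) : |(Chebyshev.S R (j + 1)).eval z| ≤ |(Chebyshev.S R j).eval z| + 1 ∧
      |(Chebyshev.S R j).eval z| ≤ |(Chebyshev.S R (j + 1)).eval z| + 1 :=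
    ⟨abs_le_abs_add_one_of_sq_add_sq_sub_mul_eq_one hz
        (by linear_combination eval_S_sq_add_eval_S_sq j z),
      abs_le_abs_add_one_of_sq_add_sq_sub_mul_eq_one hz
        (by linear_combination eval_S_sq_add_eval_S_sq j z)⟩
  induction n using Int.induction_on with
  | zero => simp
  | succ k ih =>
    have h := (hstep (k - 1)).1
    rw [sub_add_cancel] at h
    rw [add_sub_cancel_right]
    push_cast at ih ⊢
    rw [Nat.abs_cast] at ih
    rw [abs_of_nonneg (by positivity : (0 : R) ≤ k + 1)]
    linarith
  | pred k ih =>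
    have h := (hstep (-k - 1 - 1)).2
    rw [sub_add_cancel] at h
    push_cast at ih ⊢
    rw [abs_neg, Nat.abs_cast] at ih
    rw [show -(k : R) - 1 = -(k + 1) by ring, abs_neg,
      abs_of_nonneg (by positivity : (0 : R) ≤ k + 1)]
    linarith

end LinearOrderedRing

lemma pos_and_pos_of_sq_mul_mul_sub_eq_one {a u c d : ℝ} (hc : 0 ≤ c) (hd : 0 ≤ d)
    (h : a ^ 2 * (u * (c - d * u)) = 1) : 0 < u ∧ 0 < c - d * u := by
  have hu : 0 < u := by
    by_contra! hu
    have : u * (c - d * u) ≤ 0 := mul_nonpos_of_nonpos_of_nonneg hu (by nlinarith)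
    nlinarith [mul_nonpos_of_nonneg_of_nonpos (sq_nonneg a) this]
  exact ⟨hu, by nlinarith [mul_nonneg (sq_nonneg a) hu.le]⟩

lemma one_le_abs_mul_mul_four_sub_sq_of_riley_root {m n : ℤ} {x y lam alp : ℝ}
    (hlam : lam = 2 + (y - 2) * (y + 2 - x ^ 2) * (Chebyshev.S ℝ (m - 1)).eval y ^ 2)
    (halp : alp = 1 - (y + 2 - x ^ 2) * (Chebyshev.S ℝ (m - 1)).eval y *
      ((Chebyshev.S ℝ (m - 1)).eval y - (Chebyshev.S ℝ (m - 2)).eval y))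
    (hroot : (Chebyshev.S ℝ (n - 1)).eval lam * alp - (Chebyshev.S ℝ (n - 2)).eval lam = 0)
    (hx : |x| ≤ 2) (hy : y ≤ 2) :
    1 ≤ |(m : ℝ) * n| * (4 - x ^ 2) := by
  have key := sq_eval_S_mul_eq_one_of_riley_root hlam halp hroot
  set a := (Chebyshev.S ℝ (n - 1)).eval lam
  set s := (Chebyshev.S ℝ (m - 1)).eval y
  set t := y + 2 - x ^ 2
  have hx4 : x ^ 2 ≤ 4 := by nlinarith [sq_abs x, abs_nonneg x]
  obtain ⟨hu, hP⟩ := pos_and_pos_of_sq_mul_mul_sub_eq_one (by linarith) (by linarith) key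
  have ht : 0 < t := pos_of_mul_pos_left hu (sq_nonneg s)
  have hdu : 0 ≤ (2 - y) * (t * s ^ 2) := mul_nonneg (by linarith) hu.le
  have hlam' : lam = 2 - (2 - y) * (t * s ^ 2) := by rw [hlam]; ring
  have ha : |a| ≤ |(n : ℝ)| :=
    abs_eval_S_sub_one_le (abs_le.2 ⟨by linarith [sq_nonneg x], by linarith⟩) n
  have hs : |s| ≤ |(m : ℝ)| :=
    abs_eval_S_sub_one_le (abs_le.2 ⟨by linarith [sq_nonneg x], hy⟩) m
  have hsq : 1 ≤ (|(m : ℝ) * n| * (4 - x ^ 2)) ^ 2 := calc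
    1 = a ^ 2 * (t * s ^ 2 * (4 - x ^ 2 - (2 - y) * (t * s ^ 2))) := key.symm
    _ ≤ n ^ 2 * ((4 - x ^ 2) * m ^ 2 * (4 - x ^ 2)) := by
      have hts : t * s ^ 2 ≤ (4 - x ^ 2) * m ^ 2 :=
        mul_le_mul (by linarith) (sq_le_sq.2 hs) (sq_nonneg s) (by linarith)
      gcongr ?_ * (?_ * ?_)
      · exact sq_le_sq.2 ha
      · linarith
    _ = (|(m : ℝ) * n| * (4 - x ^ 2)) ^ 2 := by rw [mul_pow, sq_abs]; ring
  exact (one_le_sq_iff₀ (mul_nonneg (abs_nonneg _) (by linarith))).1 hsq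

theorem stmt12_general (m : ℕ) (n : ℤ) (x y lam alp : ℝ)
    (hlam : lam = 2 + (y - 2) * (y + 2 - x ^ 2) * S ((m : ℤ) - 1) y ^ 2)
    (halp : alp = 1 - (y + 2 - x ^ 2) * S ((m : ℤ) - 1) y * (S ((m : ℤ) - 1) y - S ((m : ℤ) - 2) y))
    (hx2 : |x| ≤ 2)
    (hroot : S (n - 1) lam * alp - S (n - 2) lam = 0)
    (hx : 2 * Real.sqrt (1 - 1 / |4 * (m : ℝ) * (n : ℝ)|) < |x|) :
    2 < y := by
  simp only [S_eq_eval] at hlam halp hroot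
  by_contra! hy
  have hbound := one_le_abs_mul_mul_four_sub_sq_of_riley_root hlam halp hroot hx2 hy
  push_cast at hbound
  have hK : |4 * (m : ℝ) * n| = 4 * |(m : ℝ) * n| := by
    rw [mul_assoc, abs_mul, abs_of_pos four_pos]
  have hpos : 0 < |4 * (m : ℝ) * n| := by
    rw [hK]
    nlinarith [abs_nonneg ((m : ℝ) * n), sq_nonneg x]
  have : |x / 2| ≤ √(1 - 1 / |4 * (m : ℝ) * n|) := by
    refine Real.abs_le_sqrt ?_
    rw [one_div, le_sub_iff_add_le, ← le_sub_iff_add_le', inv_le_iff_one_le_mul₀ hpos, hK]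
    linarith
  rw [abs_div, abs_two] at this
  linarith

theorem stmt12 (m : ℕ) (hm : 0 < m) (n : ℤ) (hn : n ≠ 0) (x y lam alp : ℝ)
    (hlam : lam = 2 + (y - 2) * (y + 2 - x ^ 2) * S ((m : ℤ) - 1) y ^ 2)
    (halp : alp = 1 - (y + 2 - x ^ 2) * S ((m : ℤ) - 1) y * (S ((m : ℤ) - 1) y - S ((m : ℤ) - 2) y))
    (hx2 : |x| ≤ 2)
    (hroot : S (n - 1) lam * alp - S (n - 2) lam = 0)
    (hx : 2 * Real.sqrt (1 - 1 / |4 * (m : ℝ) * (n : ℝ)|) < |x|) :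
    2 < y :=
  stmt12_general m n x y lam alp hlam halp hx2 hroot hx
end

section
/- Let m be a positive integer, let n be an integer with n ∉ {0, 1, 2}, set q = 2n^2 + 2|n|·√(4m(m+1)+n^2), and let x be a real number satisfying both |x| ≥ 2·cos(π/(4m+2)) and 2·√(1 - 1/q) < |x| ≤ 2. Then there exists a real number y with y > 2 such that φ(x,y) = 0, where φ(x,y) = S_{n-1}(λ)·α - S_{n-2}(λ) with λ = x^2 - y - (y-2)(y+2-x^2)·S_m(y)·S_{m-1}(y) and α = 1 + (y+2-x^2)·S_{m-1}(y)·(S_m(y) - S_{m-1}(y)). -/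
open Real

/-!
On `y ≥ 2` the substitution `λ(y)` is continuous, equals `x² - 2` at `y = 2` and is at most
`x² - y`, so it attains every value in `[-2, x² - 2)` at some `y > 2`, while `α(y) ≥ 1`.
For `|n| = p ≥ 3` the values `2 cos (π / p)` and `2 cos (2π / p)` are zeros of `S_{p-1}`
at which `φ = -1` and `φ = 1`; the lower bound on `|x|` (through `q ≥ n²` and
`cos t ≤ 1 - 2t²/π²`) is what puts `2 cos (π / p)` below `x² - 2`. For `n = -1, -2`,
`φ` is `λ - α` resp. `λ (λ - α) - 1`: positive at `y = 2` by the bound on `|x|`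
(now through `q ≥ 2n² + 2|n|(2m + 1)`), and non-positive further out.
The intermediate value theorem gives the root.
-/

section Chebyshev

variable {R : Type*}

theorem Saux_add_two [CommRing R] (k : ℕ) (z : R) :
    Saux (k + 2) z = z * Saux (k + 1) z - Saux k z := rfl

theorem Saux_two [CommRing R] : ∀ k : ℕ, Saux k (2 : R) = k + 1
  | 0 => by simp [Saux]
  | 1 => by norm_num [Saux]
  | k + 2 => by
    rw [Saux_add_two, Saux_two (k + 1), Saux_two k]
    push_cast
    ring

@[fun_prop]
theorem continuous_Saux [CommRing R] [TopologicalSpace R] [IsTopologicalRing R] :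
    ∀ k : ℕ, Continuous (fun z : R => Saux k z)
  | 0 => continuous_const
  | 1 => continuous_id
  | k + 2 => by
    have h₁ : Continuous (fun z : R => Saux (k + 1) z) := continuous_Saux (k + 1)
    have h₀ : Continuous (fun z : R => Saux k z) := continuous_Saux k
    simp only [Saux_add_two]
    fun_prop

theorem one_le_Saux_and_le_Saux_succ [CommRing R] [LinearOrder R] [IsStrictOrderedRing R]
    {y : R} (hy : 2 ≤ y) : ∀ k : ℕ, 1 ≤ Saux k y ∧ Saux k y ≤ Saux (k + 1) y
  | 0 => ⟨le_rfl, show (1 : R) ≤ y by linarith⟩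
  | k + 1 => by
    obtain ⟨h₁, h₂⟩ := one_le_Saux_and_le_Saux_succ hy k
    refine ⟨h₁.trans h₂, ?_⟩
    rw [Saux_add_two]
    nlinarith

theorem Saux_two_mul_cos_mul_sin (θ : ℝ) :
    ∀ k : ℕ, Saux k (2 * cos θ) * sin θ = sin ((k + 1) * θ)
  | 0 => by simp [Saux]
  | 1 => by
    rw [show ((1 : ℕ) : ℝ) + 1 = 2 by norm_num, sin_two_mul, Saux]
    ring
  | k + 2 => by
    have h₁ := Saux_two_mul_cos_mul_sin θ (k + 1)
    have h₀ := Saux_two_mul_cos_mul_sin θ k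
    push_cast at h₁ h₀ ⊢
    rw [Saux_add_two, show (k + 2 + 1) * θ = (k + 1 + 1) * θ + θ by ring, sin_add]
    rw [show (k + 1) * θ = (k + 1 + 1) * θ - θ by ring, sin_sub] at h₀
    linear_combination 2 * cos θ * h₁ - h₀

theorem Saux_two_mul_cos_of_mul_eq_nat_mul_pi {k j : ℕ} {θ : ℝ} (hθ : sin θ ≠ 0)
    (h : (k + 2) * θ = j * π) :
    Saux (k + 1) (2 * cos θ) = 0 ∧ Saux k (2 * cos θ) = (-1) ^ (j + 1) := by
  have h₁ := Saux_two_mul_cos_mul_sin θ (k + 1)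
  have h₀ := Saux_two_mul_cos_mul_sin θ k
  push_cast at h₁ h₀
  rw [show (k + 1 + 1) * θ = j * π by linarith, sin_nat_mul_pi] at h₁
  rw [show (k + 1) * θ = j * π - θ by linarith, sin_sub, sin_nat_mul_pi, cos_nat_mul_pi] at h₀
  refine ⟨(mul_eq_zero.1 h₁).resolve_right hθ, mul_right_cancel₀ hθ ?_⟩
  rw [h₀]
  ring

theorem S_of_nonneg [CommRing R] {j : ℤ} (hj : 0 ≤ j) (z : R) : S j z = Saux j.toNat z :=
  if_pos hj

theorem S_natCast [CommRing R] (k : ℕ) (z : R) : S k z = Saux k z := by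
  simp [S_of_nonneg]

theorem S_neg_one [CommRing R] (z : R) : S (-1) z = 0 := by
  simp [S]

theorem S_of_le_neg_two [CommRing R] {j : ℤ} (hj : j ≤ -2) (z : R) :
    S j z = -Saux (-j - 2).toNat z := by
  rw [S, if_neg (by omega), if_neg (by omega)]

theorem S_neg_two [CommRing R] (z : R) : S (-2) z = -1 := by
  simp [S_of_le_neg_two, Saux]

theorem S_neg_three [CommRing R] (z : R) : S (-3) z = -z := by
  simp [S_of_le_neg_two, Saux]

theorem S_neg_four [CommRing R] (z : R) : S (-4) z = 1 - z ^ 2 := by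
  rw [S_of_le_neg_two (by norm_num), show (-(-4 : ℤ) - 2).toNat = 2 by rfl, Saux_add_two]
  simp only [Saux]
  ring

theorem S_two [CommRing R] (j : ℤ) : S j (2 : R) = j + 1 := by
  rcases le_or_gt 0 j with hj | hj
  · obtain ⟨k, rfl⟩ := Int.eq_ofNat_of_zero_le hj
    simp [S_natCast, Saux_two]
  rcases eq_or_lt_of_le (Int.le_sub_one_of_lt hj) with rfl | hj
  · simp [S_neg_one]
  · obtain ⟨k, hk⟩ := Int.eq_ofNat_of_zero_le (by omega : 0 ≤ -j - 2)
    rw [S_of_le_neg_two (by omega), hk, Int.toNat_natCast, Saux_two,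
      show j = -(k : ℤ) - 2 by omega]
    push_cast
    ring

@[fun_prop]
theorem continuous_S [CommRing R] [TopologicalSpace R] [IsTopologicalRing R] (j : ℤ) :
    Continuous (fun z : R => S j z) := by
  unfold S
  split_ifs <;> fun_prop

theorem S_nonneg_and_le_S_add_one [CommRing R] [LinearOrder R] [IsStrictOrderedRing R]
    {j : ℤ} (hj : -1 ≤ j) {y : R} (hy : 2 ≤ y) : 0 ≤ S j y ∧ S j y ≤ S (j + 1) y := by
  rcases eq_or_lt_of_le hj with rfl | hj
  · simp [S_neg_one, S_of_nonneg, Saux]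
  obtain ⟨k, rfl⟩ := Int.eq_ofNat_of_zero_le (by omega : 0 ≤ j)
  obtain ⟨h₁, h₂⟩ := one_le_Saux_and_le_Saux_succ hy k
  rw [← Nat.cast_one, ← Nat.cast_add, S_natCast, S_natCast]
  exact ⟨zero_le_one.trans h₁, h₂⟩

theorem S_sub_one_eq_zero_and_S_sub_two_eq [CommRing R] {n : ℤ} {k : ℕ}
    (hn : n.natAbs = k + 2) {z : R} (hz : Saux (k + 1) z = 0) :
    S (n - 1) z = 0 ∧ S (n - 2) z = Saux k z := by
  rcases Int.natAbs_eq n with h | h <;> rw [hn] at h <;> subst h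
  · rw [S_of_nonneg (by omega), S_of_nonneg (by omega)]
    have e₁ : (((k + 2 : ℕ) : ℤ) - 1).toNat = k + 1 := by omega
    have e₂ : (((k + 2 : ℕ) : ℤ) - 2).toNat = k := by omega
    exact ⟨by rw [e₁, hz], by rw [e₂]⟩
  · rw [S_of_le_neg_two (by omega), S_of_le_neg_two (by omega)]
    have e₁ : (-(-((k + 2 : ℕ) : ℤ) - 1) - 2).toNat = k + 1 := by omega
    have e₂ : (-(-((k + 2 : ℕ) : ℤ) - 2) - 2).toNat = k + 2 := by omega
    rw [e₁, e₂, Saux_add_two, hz]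
    exact ⟨neg_zero, by ring⟩

end Chebyshev

theorem exists_gt_eq_zero_of_continuous {F : ℝ → ℝ} (hF : Continuous F) {c a b : ℝ}
    (ha : c < a) (hb : c < b) (hFa : F a ≤ 0) (hFb : 0 ≤ F b) : ∃ y, c < y ∧ F y = 0 := by
  obtain ⟨y, hy, hFy⟩ := intermediate_value_uIcc hF.continuousOn (Set.mem_uIcc.2 (.inl ⟨hFa, hFb⟩))
  exact ⟨y, (lt_min ha hb).trans_le hy.1, hFy⟩

theorem exists_gt_eq_zero_of_pos_of_nonpos {F : ℝ → ℝ} (hF : Continuous F) {c b : ℝ}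
    (hcb : c ≤ b) (hFc : 0 < F c) (hFb : F b ≤ 0) : ∃ y, c < y ∧ F y = 0 := by
  obtain ⟨y, hy, hFy⟩ := intermediate_value_Icc' hcb hF.continuousOn ⟨hFb, hFc.le⟩
  exact ⟨y, hy.1.lt_of_ne (by rintro rfl; exact hFc.ne' hFy), hFy⟩

theorem cos_pi_div_le {p : ℝ} (hp : 1 ≤ p) : cos (π / p) ≤ 1 - 2 / p ^ 2 := by
  have h := cos_le_one_sub_mul_cos_sq (x := π / p) <| by
    rw [abs_of_pos (by positivity)]
    exact div_le_self pi_pos.le hp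
  have hp₀ : p ≠ 0 := by positivity
  convert h using 2
  field_simp

theorem four_sub_sq_mul_lt_of_two_mul_sqrt_lt {q x : ℝ} (hq : 1 ≤ q)
    (h : 2 * √(1 - 1 / q) < |x|) : (4 - x ^ 2) * q < 4 := by
  have h₀ : 0 ≤ 1 - 1 / q := by
    rw [sub_nonneg, div_le_one (by linarith)]
    exact hq
  have h₁ := mul_self_lt_mul_self (by positivity) h
  rw [abs_mul_abs_self, mul_mul_mul_comm, mul_self_sqrt h₀] at h₁
  have e : (1 - 1 / q) * q = q - 1 := by field_simp
  nlinarith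

theorem two_mul_add_one_le_sqrt {a b : ℝ} (ha : 0 ≤ a) (hb : 1 ≤ b ^ 2) :
    2 * a + 1 ≤ √(4 * a * (a + 1) + b ^ 2) :=
  (le_sqrt (by linarith) (by positivity)).2 (by nlinarith)

section Riley

def rileyLambda (m : ℕ) (x y : ℝ) : ℝ :=
  x ^ 2 - y - (y - 2) * (y + 2 - x ^ 2) * S (m : ℤ) y * S ((m : ℤ) - 1) y

def rileyAlpha (m : ℕ) (x y : ℝ) : ℝ :=
  1 + (y + 2 - x ^ 2) * S ((m : ℤ) - 1) y * (S (m : ℤ) y - S ((m : ℤ) - 1) y)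

def rileyPoly (m : ℕ) (n : ℤ) (x y : ℝ) : ℝ :=
  S (n - 1) (rileyLambda m x y) * rileyAlpha m x y - S (n - 2) (rileyLambda m x y)

variable {m : ℕ} {x : ℝ}

theorem continuous_rileyPoly (m : ℕ) (n : ℤ) (x : ℝ) : Continuous (rileyPoly m n x) := by
  unfold rileyPoly rileyLambda rileyAlpha
  fun_prop

theorem rileyLambda_two : rileyLambda m x 2 = x ^ 2 - 2 := by
  simp [rileyLambda]

theorem rileyAlpha_two : rileyAlpha m x 2 = 1 + (4 - x ^ 2) * m := by
  simp only [rileyAlpha, S_two]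
  push_cast
  ring

theorem S_pred_nonneg_and_le (m : ℕ) {y : ℝ} (hy : 2 ≤ y) :
    0 ≤ S ((m : ℤ) - 1) y ∧ S ((m : ℤ) - 1) y ≤ S (m : ℤ) y := by
  simpa using S_nonneg_and_le_S_add_one (j := (m : ℤ) - 1) (by omega) hy

theorem rileyLambda_le (hx : x ^ 2 ≤ 4) {y : ℝ} (hy : 2 ≤ y) : rileyLambda m x y ≤ x ^ 2 - y := by
  obtain ⟨h₀, h₁⟩ := S_pred_nonneg_and_le m hy
  have : 0 ≤ (y - 2) * (y + 2 - x ^ 2) * S (m : ℤ) y * S ((m : ℤ) - 1) y := by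
    have := mul_nonneg (sub_nonneg.2 hy) (by linarith : 0 ≤ y + 2 - x ^ 2)
    exact mul_nonneg (mul_nonneg this (h₀.trans h₁)) h₀
  unfold rileyLambda
  linarith

theorem one_le_rileyAlpha (hx : x ^ 2 ≤ 4) {y : ℝ} (hy : 2 ≤ y) : 1 ≤ rileyAlpha m x y := by
  obtain ⟨h₀, h₁⟩ := S_pred_nonneg_and_le m hy
  have := mul_nonneg (mul_nonneg (by linarith : 0 ≤ y + 2 - x ^ 2) h₀) (sub_nonneg.2 h₁)
  unfold rileyAlpha
  linarith

theorem exists_rileyLambda_eq (hx : x ^ 2 ≤ 4) {c : ℝ} (hc₁ : -2 ≤ c) (hc₂ : c < x ^ 2 - 2) :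
    ∃ y, 2 < y ∧ rileyLambda m x y = c := by
  have hcont : Continuous fun y ↦ rileyLambda m x y - c := by
    unfold rileyLambda
    fun_prop
  obtain ⟨y, hy, h⟩ := exists_gt_eq_zero_of_pos_of_nonpos hcont (by norm_num : (2 : ℝ) ≤ 6)
    (by rw [rileyLambda_two]; linarith)
    (by linarith [rileyLambda_le (m := m) hx (by norm_num : (2 : ℝ) ≤ 6)])
  exact ⟨y, hy, sub_eq_zero.1 h⟩

theorem exists_rileyPoly_eq_zero_of_three_le_natAbs {n : ℤ} (hn : 3 ≤ n.natAbs)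
    (hx : x ^ 2 ≤ 4) (hxn : (4 - x ^ 2) * n ^ 2 < 4) : ∃ y, 2 < y ∧ rileyPoly m n x y = 0 := by
  obtain ⟨k, hk⟩ : ∃ k, n.natAbs = k + 2 := ⟨n.natAbs - 2, by omega⟩
  have hp : (3 : ℝ) ≤ k + 2 := by exact_mod_cast (by omega : 3 ≤ k + 2)
  have hn₂ : (n : ℝ) ^ 2 = (k + 2) ^ 2 := by
    have := Int.natAbs_sq n
    rw [hk] at this
    exact_mod_cast this.symm
  have value (j : ℕ) (hj₀ : 0 < j) (hj : j < k + 2) (y : ℝ)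
      (hy : rileyLambda m x y = 2 * cos (j * π / (k + 2))) : rileyPoly m n x y = (-1) ^ j := by
    have hθ : sin (j * π / (k + 2)) ≠ 0 := by
      refine (sin_pos_of_pos_of_lt_pi (by positivity) ?_).ne'
      rw [div_lt_iff₀ (by positivity)]
      exact mul_lt_mul_of_pos_right (by exact_mod_cast hj) pi_pos |>.trans_eq (mul_comm _ _)
    obtain ⟨h₁, h₀⟩ := Saux_two_mul_cos_of_mul_eq_nat_mul_pi (k := k) (j := j) hθ (by field_simp)
    obtain ⟨e₁, e₂⟩ := S_sub_one_eq_zero_and_S_sub_two_eq hk h₁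
    rw [rileyPoly, hy, e₁, e₂, h₀]
    ring
  have hcos₁ : 2 * cos (π / (k + 2)) < x ^ 2 - 2 := by
    have := cos_pi_div_le (by linarith : (1 : ℝ) ≤ k + 2)
    have : 4 - x ^ 2 < 4 / (k + 2) ^ 2 := by
      rw [lt_div_iff₀ (by positivity), ← hn₂]
      exact hxn
    linarith [show 4 / ((k : ℝ) + 2) ^ 2 = 2 * (2 / ((k : ℝ) + 2) ^ 2) by ring]
  have hcos₂ : cos (2 * π / (k + 2)) ≤ cos (π / (k + 2)) := by
    apply cos_le_cos_of_nonneg_of_le_pi (by positivity)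
    · rw [div_le_iff₀ (by positivity)]
      nlinarith [pi_pos]
    · gcongr
      linarith [pi_pos]
  obtain ⟨y₁, hy₁, h₁⟩ := exists_rileyLambda_eq (m := m) (c := 2 * cos (π / (k + 2))) hx
    (by linarith [neg_one_le_cos (π / (k + 2))]) hcos₁
  obtain ⟨y₂, hy₂, h₂⟩ := exists_rileyLambda_eq (m := m) (c := 2 * cos (2 * π / (k + 2))) hx
    (by linarith [neg_one_le_cos (2 * π / (k + 2))]) (by linarith)
  refine exists_gt_eq_zero_of_continuous (continuous_rileyPoly m n x) hy₁ hy₂ ?_ ?_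
  · rw [value 1 one_pos (by omega) y₁ (by simpa using h₁)]
    norm_num
  · rw [value 2 two_pos (by omega) y₂ (by simpa using h₂)]
    norm_num

theorem exists_rileyPoly_neg_one_eq_zero (hx : x ^ 2 ≤ 4) (hxm : (4 - x ^ 2) * (m + 1) < 1) :
    ∃ y, 2 < y ∧ rileyPoly m (-1) x y = 0 := by
  have hφ (y : ℝ) : rileyPoly m (-1) x y = rileyLambda m x y - rileyAlpha m x y := by
    rw [rileyPoly, show (-1 : ℤ) - 1 = -2 by rfl, show (-1 : ℤ) - 2 = -3 by rfl, S_neg_two,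
      S_neg_three]
    ring
  refine exists_gt_eq_zero_of_pos_of_nonpos (continuous_rileyPoly m (-1) x)
    (by norm_num : (2 : ℝ) ≤ 6) ?_ ?_
  · rw [hφ, rileyLambda_two, rileyAlpha_two]
    linarith
  · rw [hφ]
    linarith [rileyLambda_le (m := m) hx (by norm_num : (2 : ℝ) ≤ 6),
      one_le_rileyAlpha (m := m) hx (by norm_num : (2 : ℝ) ≤ 6)]

theorem exists_rileyPoly_neg_two_eq_zero (hx : x ^ 2 ≤ 4) (hxm : (4 - x ^ 2) * (2 * m + 3) < 1) :
    ∃ y, 2 < y ∧ rileyPoly m (-2) x y = 0 := by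
  have hφ (y : ℝ) : rileyPoly m (-2) x y =
      rileyLambda m x y * (rileyLambda m x y - rileyAlpha m x y) - 1 := by
    rw [rileyPoly, show (-2 : ℤ) - 1 = -3 by rfl, show (-2 : ℤ) - 2 = -4 by rfl, S_neg_three,
      S_neg_four]
    ring
  obtain ⟨y₁, hy₁, h₁⟩ := exists_rileyLambda_eq (m := m) (c := 0) hx (by norm_num)
    (by nlinarith)
  refine exists_gt_eq_zero_of_pos_of_nonpos (continuous_rileyPoly m (-2) x) hy₁.le ?_ ?_
  · rw [hφ, rileyLambda_two, rileyAlpha_two]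
    nlinarith [mul_nonneg (sq_nonneg (4 - x ^ 2)) (Nat.cast_nonneg m : (0 : ℝ) ≤ m)]
  · rw [hφ, h₁]
    norm_num

end Riley

theorem stmt18_general (m : ℕ) (n : ℤ) (hn0 : n ≠ 0) (hn1 : n ≠ 1) (hn2 : n ≠ 2)
    (q : ℝ)
    (hq : q = 2 * (n : ℝ) ^ 2 +
      2 * |(n : ℝ)| * Real.sqrt (4 * (m : ℝ) * ((m : ℝ) + 1) + (n : ℝ) ^ 2))
    (x : ℝ)
    (hx2 : 2 * Real.sqrt (1 - 1 / q) < |x|) (hx3 : |x| ≤ 2) :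
    ∃ y : ℝ, 2 < y ∧
      S (n - 1) (x ^ 2 - y - (y - 2) * (y + 2 - x ^ 2) * S (m : ℤ) y * S ((m : ℤ) - 1) y) *
      (1 + (y + 2 - x ^ 2) * S ((m : ℤ) - 1) y * (S (m : ℤ) y - S ((m : ℤ) - 1) y)) -
      S (n - 2) (x ^ 2 - y - (y - 2) * (y + 2 - x ^ 2) * S (m : ℤ) y * S ((m : ℤ) - 1) y) = 0 := by
  have hx : x ^ 2 ≤ 4 := by nlinarith [sq_abs x, abs_nonneg x]
  have hn : (1 : ℝ) ≤ |(n : ℝ)| := by exact_mod_cast Int.one_le_abs hn0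
  have hqn : 2 * n ^ 2 + 2 * |(n : ℝ)| * (2 * m + 1) ≤ q := by
    rw [hq]
    gcongr
    exact two_mul_add_one_le_sqrt (Nat.cast_nonneg m) (by nlinarith [sq_abs (n : ℝ)])
  have hxq : (4 - x ^ 2) * q < 4 :=
    four_sub_sq_mul_lt_of_two_mul_sqrt_lt (by nlinarith [sq_abs (n : ℝ)]) hx2
  obtain h | rfl | rfl : 3 ≤ n.natAbs ∨ n = -2 ∨ n = -1 := by omega
  · refine exists_rileyPoly_eq_zero_of_three_le_natAbs h hx ?_
    have hnq : (n : ℝ) ^ 2 ≤ q := by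
      nlinarith [sq_nonneg (n : ℝ), abs_nonneg (n : ℝ), (Nat.cast_nonneg m : (0 : ℝ) ≤ m)]
    calc (4 - x ^ 2) * n ^ 2 ≤ (4 - x ^ 2) * q := by gcongr
      _ < 4 := hxq
  · refine exists_rileyPoly_neg_two_eq_zero hx ?_
    have hq₂ : 8 * (m : ℝ) + 12 ≤ q := by norm_num at hqn; linarith
    nlinarith
  · refine exists_rileyPoly_neg_one_eq_zero hx ?_
    have hq₁ : 4 * (m : ℝ) + 4 ≤ q := by norm_num at hqn; linarith
    nlinarith

theorem stmt18 (m : ℕ) (hm : 0 < m) (n : ℤ) (hn0 : n ≠ 0) (hn1 : n ≠ 1) (hn2 : n ≠ 2)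
    (q : ℝ)
    (hq : q = 2 * (n : ℝ) ^ 2 +
      2 * |(n : ℝ)| * Real.sqrt (4 * (m : ℝ) * ((m : ℝ) + 1) + (n : ℝ) ^ 2))
    (x : ℝ)
    (hx1 : 2 * Real.cos (Real.pi / (4 * (m : ℝ) + 2)) ≤ |x|)
    (hx2 : 2 * Real.sqrt (1 - 1 / q) < |x|) (hx3 : |x| ≤ 2) :
    ∃ y : ℝ, 2 < y ∧
      S (n - 1) (x ^ 2 - y - (y - 2) * (y + 2 - x ^ 2) * S (m : ℤ) y * S ((m : ℤ) - 1) y) *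
      (1 + (y + 2 - x ^ 2) * S ((m : ℤ) - 1) y * (S (m : ℤ) y - S ((m : ℤ) - 1) y)) -
      S (n - 2) (x ^ 2 - y - (y - 2) * (y + 2 - x ^ 2) * S (m : ℤ) y * S ((m : ℤ) - 1) y) = 0 :=
  stmt18_general m n hn0 hn1 hn2 q hq x hx2 hx3
end
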